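/- For r ≥ 2 and the shifted Legendre polynomial P_n, ∫_{[0,1]^r} ∏_{i=1}^r P_n(x_i) / (1 - x_1⋯x_r) dx = ∑_{k=0}^∞ ( ∫_0^1 x^k P_n(x) dx )^r = ∑_{k=0}^∞ ((-1)^n (k!)^2/((k-n)!(k+n+1)!))^r, where terms with k < n vanish. -/

import Mathlib

open MeasureTheory intervalIntegral

noncomputable def shiftedLegendre (n : ℕ) : ℝ → ℝ :=
  fun x => (1 / (n.factorial : ℝ)) * iteratedDeriv n (fun y : ℝ => y ^ n * (1 - y) ^ n) x

open Polynomial Set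


lemma aux_iteratedDeriv_polyeval (p : ℝ[X]) (m : ℕ) :
    iteratedDeriv m (fun y => p.eval y) = fun x => (derivative^[m] p).eval x := by
  induction m with
  | zero => simp
  | succ m ih =>
    rw [iteratedDeriv_succ, ih, Function.iterate_succ_apply']
    ext x
    exact Polynomial.deriv _

noncomputable def legP (n : ℕ) : ℝ[X] :=
  Polynomial.C (1 / (n.factorial : ℝ)) * derivative^[n] (X ^ n * (1 - X) ^ n)

lemma shiftedLegendre_eq (n : ℕ) : _root_.shiftedLegendre n = fun x => (legP n).eval x := by
  funext x
  have h : (fun y : ℝ => y ^ n * (1 - y) ^ n)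
      = fun y => (((X : ℝ[X]) ^ n * (1 - X) ^ n)).eval y := by
    funext y; simp
  unfold _root_.shiftedLegendre legP
  rw [h, aux_iteratedDeriv_polyeval]
  simp

lemma shiftedLegendre_cont (n : ℕ) : Continuous (shiftedLegendre n) := by
  rw [shiftedLegendre_eq]; exact (legP n).continuous

lemma poly_ibp (p q : ℝ[X]) :
    ∫ x in (0:ℝ)..1, p.eval x * (derivative q).eval x
      = p.eval 1 * q.eval 1 - p.eval 0 * q.eval 0
        - ∫ x in (0:ℝ)..1, (derivative p).eval x * q.eval x :=
  integral_mul_deriv_eq_deriv_mul (fun x _ => p.hasDerivAt x) (fun x _ => q.hasDerivAt x)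
    ((p.derivative.continuous).intervalIntegrable _ _)
    ((q.derivative.continuous).intervalIntegrable _ _)

lemma eval_iter_deriv_zero {n j : ℕ} (hj : j < n) :
    (derivative^[j] ((X : ℝ[X]) ^ n * (1 - X) ^ n)).eval 0 = 0 := by
  obtain ⟨c, hc⟩ := pow_sub_dvd_iterate_derivative_of_pow_dvd (p := (X : ℝ[X]) ^ n * (1 - X) ^ n)
    (q := X) (n := n) j (dvd_mul_right _ _)
  rw [hc]
  simp [zero_pow (by omega : n - j ≠ 0)]

lemma eval_iter_deriv_one {n j : ℕ} (hj : j < n) :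
    (derivative^[j] ((X : ℝ[X]) ^ n * (1 - X) ^ n)).eval 1 = 0 := by
  obtain ⟨c, hc⟩ := pow_sub_dvd_iterate_derivative_of_pow_dvd (p := (X : ℝ[X]) ^ n * (1 - X) ^ n)
    (q := 1 - X) (n := n) j (dvd_mul_left _ _)
  rw [hc]
  simp [zero_pow (by omega : n - j ≠ 0)]

lemma iter_ibp (p : ℝ[X]) (n : ℕ)
    (h0 : ∀ j < n, (derivative^[j] p).eval 0 = 0)
    (h1 : ∀ j < n, (derivative^[j] p).eval 1 = 0) (q : ℝ[X]) :
    ∀ m, m ≤ n → (∫ x in (0:ℝ)..1, q.eval x * (derivative^[n] p).eval x)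
      = (-1)^m * ∫ x in (0:ℝ)..1, (derivative^[m] q).eval x * (derivative^[n-m] p).eval x := by
  intro m
  induction m with
  | zero => intro _; simp
  | succ m ih =>
    intro hm
    rw [ih (by omega)]
    have hnm : n - m = (n - (m + 1)) + 1 := by omega
    have : derivative^[n - m] p = derivative (derivative^[n - (m+1)] p) := by
      rw [hnm, Function.iterate_succ_apply']
    rw [this, poly_ibp, h0 _ (by omega), h1 _ (by omega)]
    rw [← Function.iterate_succ_apply' derivative]
    ring

lemma beta_nat : ∀ (b a : ℕ), (∫ x in (0:ℝ)..1, x ^ a * (1 - x) ^ b)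
    = (a.factorial * b.factorial : ℝ) / ((a + b + 1).factorial : ℝ) := by
  intro b
  induction b with
  | zero =>
    intro a
    simp only [pow_zero, mul_one, integral_pow, one_pow, Nat.factorial_zero, Nat.cast_one,
      Nat.add_zero]
    rw [Nat.factorial_succ]
    push_cast
    have : (a : ℝ) + 1 ≠ 0 := by positivity
    have h2 : (a.factorial : ℝ) ≠ 0 := by positivity
    field_simp
    simp
  | succ b ih =>
    intro a
    have ha : (a : ℝ) + 1 ≠ 0 := by positivity
    have hu : ∀ x ∈ Set.uIcc (0:ℝ) 1, HasDerivAt (fun x : ℝ => (1 - x) ^ (b + 1))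
        ((b + 1 : ℕ) * (1 - x) ^ b * (-1)) x := by
      intro x _
      have h := (((hasDerivAt_id x).const_sub 1).pow (b + 1))
      simpa [Pi.pow_def] using h
    have hv : ∀ x ∈ Set.uIcc (0:ℝ) 1, HasDerivAt (fun x : ℝ => x ^ (a + 1) / (a + 1))
        (((a + 1 : ℕ) * x ^ a) / (a + 1)) x := by
      intro x _
      have h := (hasDerivAt_pow (a + 1) x).div_const ((a : ℝ) + 1)
      simpa using h
    have hibp := integral_mul_deriv_eq_deriv_mul hu hv
      ((by continuity : Continuous fun x : ℝ => ((b + 1 : ℕ) : ℝ) * (1 - x) ^ b * (-1)).intervalIntegrable _ _)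
      ((by continuity : Continuous fun x : ℝ => (((a + 1 : ℕ) : ℝ) * x ^ a) / (a + 1)).intervalIntegrable _ _)
    have hL : (∫ x in (0:ℝ)..1, (1 - x) ^ (b + 1) * (((a + 1 : ℕ) : ℝ) * x ^ a / (a + 1)))
        = ∫ x in (0:ℝ)..1, x ^ a * (1 - x) ^ (b + 1) := by
      apply integral_congr
      intro x _
      push_cast
      field_simp
    have hR : (∫ x in (0:ℝ)..1, ((b + 1 : ℕ) : ℝ) * (1 - x) ^ b * (-1) * (x ^ (a + 1) / (a + 1)))
        = (-(((b:ℝ) + 1) / ((a:ℝ) + 1))) * ∫ x in (0:ℝ)..1, x ^ (a + 1) * (1 - x) ^ b := by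
      rw [← intervalIntegral.integral_const_mul]
      apply integral_congr
      intro x _
      push_cast
      field_simp
    rw [hL, hR] at hibp
    rw [hibp, ih (a + 1)]
    simp only [one_pow, sub_self, zero_pow (Nat.succ_ne_zero b), zero_mul, zero_div, mul_zero,
      zero_pow (Nat.succ_ne_zero a), sub_zero, zero_sub]
    push_cast [Nat.factorial_succ]
    have h3 : a + 1 + b = a + (b + 1) := by omega
    rw [h3]
    have hf : ((a + (b + 1)).factorial : ℝ) ≠ 0 := by positivity
    have hb : (a:ℝ) + 1 + (b:ℝ) + 1 ≠ 0 := by positivity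
    field_simp
    ring

lemma integral_pow_mul_shiftedLegendre (n k : ℕ) :
    (∫ x in (0:ℝ)..1, x ^ k * shiftedLegendre n x)
      = if n ≤ k then
          (-1) ^ n * ((k.factorial : ℝ)) ^ 2 /
            (((k - n).factorial : ℝ) * ((k + n + 1).factorial : ℝ))
        else 0 := by
  have h1 : (∫ x in (0:ℝ)..1, x ^ k * shiftedLegendre n x)
      = (1 / (n.factorial : ℝ)) * ∫ x in (0:ℝ)..1,
          ((X:ℝ[X])^k).eval x * (derivative^[n] ((X:ℝ[X])^n * (1-X)^n)).eval x := by
    rw [← intervalIntegral.integral_const_mul, shiftedLegendre_eq]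
    apply integral_congr
    intro x _
    simp only [legP, eval_mul, eval_C, eval_pow, eval_X]
    ring
  rw [h1, iter_ibp _ n (fun j hj => eval_iter_deriv_zero hj)
    (fun j hj => eval_iter_deriv_one hj) _ n le_rfl, Nat.sub_self]
  simp only [Function.iterate_zero_apply]
  by_cases hnk : n ≤ k
  · rw [if_pos hnk]
    have h2 : ∀ x ∈ Set.uIcc (0:ℝ) 1, (derivative^[n] ((X:ℝ[X])^k)).eval x
          * (((X:ℝ[X])^n * (1-X)^n)).eval x
        = (k.descFactorial n : ℝ) * (x^k * (1-x)^n) := by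
      intro x _
      have hx : x^(k-n) * x^n = x^k := by rw [← pow_add, Nat.sub_add_cancel hnk]
      simp only [iterate_derivative_X_pow_eq_natCast_mul, eval_mul, eval_pow, eval_natCast,
        eval_X, eval_one, eval_sub]
      rw [← hx]
      ring
    rw [integral_congr h2, intervalIntegral.integral_const_mul, beta_nat]
    have hd : (((k - n).factorial * k.descFactorial n : ℕ) : ℝ) = (k.factorial : ℝ) := by
      exact_mod_cast congrArg (Nat.cast (R := ℝ)) (Nat.factorial_mul_descFactorial hnk)
    push_cast at hd
    have hm : ((k - n).factorial : ℝ) ≠ 0 := by positivity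
    have hK : ((k + n + 1).factorial : ℝ) ≠ 0 := by positivity
    have hn : ((n).factorial : ℝ) ≠ 0 := by positivity
    have hdd : ((k.descFactorial n : ℕ) : ℝ) = (k.factorial : ℝ) / ((k - n).factorial : ℝ) := by
      field_simp
      linarith [hd]
    rw [hdd]
    field_simp
  · rw [if_neg hnk]
    have h2 : ∀ x ∈ Set.uIcc (0:ℝ) 1, (derivative^[n] ((X:ℝ[X])^k)).eval x
          * (((X:ℝ[X])^n * (1-X)^n)).eval x = 0 := by
      intro x _
      simp [iterate_derivative_X_pow_eq_natCast_mul,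
        Nat.descFactorial_eq_zero_iff_lt.mpr (by omega : k < n)]
    rw [integral_congr h2]
    simp

lemma pi_restrict (r : ℕ) :
    (volume : Measure (Fin r → ℝ)).restrict (Set.univ.pi fun _ => Set.Ioo (0:ℝ) 1)
      = Measure.pi (fun _ : Fin r => volume.restrict (Set.Ioo (0:ℝ) 1)) := by
  refine (Measure.pi_eq fun t ht => ?_).symm
  rw [Measure.restrict_apply (MeasurableSet.univ_pi ht), ← Set.pi_inter_distrib, volume_pi,
    Measure.pi_pi]
  simp_rw [Measure.restrict_apply (ht _)]

lemma pi_integral (r : ℕ) (g : ℝ → ℝ) (hgint : IntegrableOn g (Set.Ioo (0:ℝ) 1)) :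
    Integrable (fun x : Fin r → ℝ => ∏ i, g (x i))
      (Measure.pi fun _ => volume.restrict (Set.Ioo (0:ℝ) 1)) ∧
    (∫ x : Fin r → ℝ, (∏ i, g (x i)) ∂(Measure.pi fun _ => volume.restrict (Set.Ioo (0:ℝ) 1)))
      = (∫ x in Set.Ioo (0:ℝ) 1, g x) ^ r := by
  letI : MeasureSpace ℝ := ⟨volume.restrict (Set.Ioo 0 1)⟩
  haveI : SigmaFinite (volume : Measure ℝ) := Restrict.sigmaFinite _ _
  constructor
  · exact MeasureTheory.Integrable.fintype_prod (f := fun _ : Fin r => g) (fun _ => hgint)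
  · have h := MeasureTheory.integral_fintype_prod_eq_pow (ι := Fin r) g (μ := (volume : Measure ℝ))
    rwa [Fintype.card_fin] at h

theorem stmt_4 (r : ℕ) (hr : 2 ≤ r) (n : ℕ) :
    (∫ x in Set.univ.pi (fun _ : Fin r => Set.Ioo (0:ℝ) 1),
        (∏ i, shiftedLegendre n (x i)) / (1 - ∏ i, x i) =
      ∑' k : ℕ, (∫ x in (0:ℝ)..1, x ^ k * shiftedLegendre n x) ^ r) ∧
    (∫ x in Set.univ.pi (fun _ : Fin r => Set.Ioo (0:ℝ) 1),
        (∏ i, shiftedLegendre n (x i)) / (1 - ∏ i, x i) =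
      ∑' k : ℕ, (if n ≤ k then
          (-1) ^ n * ((k.factorial : ℝ)) ^ 2 /
            (((k - n).factorial : ℝ) * ((k + n + 1).factorial : ℝ))
        else 0) ^ r) := by
  have hSm : MeasurableSet (Set.univ.pi fun _ : Fin r => Set.Ioo (0:ℝ) 1) :=
    MeasurableSet.univ_pi fun _ => measurableSet_Ioo
  obtain ⟨C, hC⟩ := (isCompact_Icc (a := (0:ℝ)) (b := 1)).exists_bound_of_continuousOn
    (shiftedLegendre_cont n).continuousOn
  have hC0 : 0 ≤ C := le_trans (norm_nonneg _) (hC 0 (by norm_num))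
  set g : ℕ → ℝ → ℝ := fun k x => x ^ k * shiftedLegendre n x with hg
  have hgc : ∀ k, Continuous (g k) := fun k => (continuous_pow k).mul (shiftedLegendre_cont n)
  have hgint : ∀ k, IntegrableOn (g k) (Set.Ioo (0:ℝ) 1) := fun k =>
    ((hgc k).continuousOn.integrableOn_compact isCompact_Icc).mono_set Set.Ioo_subset_Icc_self
  -- the one-dimensional integral over Ioo equals the interval integral
  have hioo : ∀ k, (∫ x in Set.Ioo (0:ℝ) 1, g k x) = ∫ x in (0:ℝ)..1, x ^ k * shiftedLegendre n x := by
    intro k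
    rw [intervalIntegral.integral_of_le zero_le_one, integral_Ioc_eq_integral_Ioo]
  -- bound on one-dimensional absolute integral
  have habs : ∀ k, (∫ x in Set.Ioo (0:ℝ) 1, ‖g k x‖) ≤ C / (k + 1) := by
    intro k
    have hmono : (∫ x in Set.Ioo (0:ℝ) 1, ‖g k x‖) ≤ ∫ x in Set.Ioo (0:ℝ) 1, C * x ^ k := by
      apply setIntegral_mono_on ((hgint k).norm)
      · exact (((continuous_const.mul (continuous_pow k))).continuousOn.integrableOn_compact
          isCompact_Icc).mono_set Set.Ioo_subset_Icc_self
      · exact measurableSet_Ioo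
      · intro x hx
        have hx0 : (0:ℝ) ≤ x := le_of_lt hx.1
        have : ‖g k x‖ = x ^ k * ‖shiftedLegendre n x‖ := by
          rw [hg]; simp [abs_mul, abs_pow, abs_of_nonneg hx0]
        rw [this, mul_comm C]
        exact mul_le_mul_of_nonneg_left (hC x ⟨hx0, le_of_lt hx.2⟩) (by positivity)
    refine le_trans hmono ?_
    rw [MeasureTheory.integral_const_mul, ← integral_Ioc_eq_integral_Ioo,
      ← intervalIntegral.integral_of_le zero_le_one, integral_pow]
    norm_num [div_eq_mul_inv]
  -- summability of the bound
  have hsum : Summable (fun k : ℕ => (C / (k + 1 : ℝ)) ^ r) := by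
    have h1 : Summable (fun k : ℕ => (1 : ℝ) / (k : ℝ) ^ r) :=
      Real.summable_one_div_nat_pow.mpr (by omega)
    have h2 : Summable (fun k : ℕ => (1 : ℝ) / ((k : ℝ) + 1) ^ r) := by
      have := (summable_nat_add_iff 1).mpr h1
      simpa using this
    have := h2.mul_left (C ^ r)
    apply this.congr
    intro k
    rw [div_pow]
    field_simp
  set ν : Measure (Fin r → ℝ) := Measure.pi (fun _ : Fin r => volume.restrict (Set.Ioo (0:ℝ) 1))
    with hν
  set f : ℕ → (Fin r → ℝ) → ℝ := fun k x => ∏ i, g k (x i) with hf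
  -- pointwise identity on the cube
  have hpt : ∀ x ∈ Set.univ.pi fun _ : Fin r => Set.Ioo (0:ℝ) 1,
      (∏ i, shiftedLegendre n (x i)) / (1 - ∏ i, x i) = ∑' k, f k x := by
    intro x hx
    have hx' : ∀ i, x i ∈ Set.Ioo (0:ℝ) 1 := fun i => hx i (Set.mem_univ i)
    set t : ℝ := ∏ i, x i with ht
    have ht0 : 0 ≤ t := Finset.prod_nonneg fun i _ => le_of_lt (hx' i).1
    have ht1 : t < 1 := by
      have i0 : Fin r := ⟨0, by omega⟩
      have hprod : t = x i0 * ∏ i ∈ Finset.univ.erase i0, x i :=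
        (Finset.mul_prod_erase Finset.univ x (Finset.mem_univ i0)).symm
      have he1 : (∏ i ∈ Finset.univ.erase i0, x i) ≤ 1 :=
        Finset.prod_le_one (fun i _ => le_of_lt (hx' i).1) (fun i _ => le_of_lt (hx' i).2)
      calc t ≤ x i0 := by
              rw [hprod]
              exact mul_le_of_le_one_right (le_of_lt (hx' i0).1) he1
        _ < 1 := (hx' i0).2
    have hfk : ∀ k, f k x = t ^ k * ∏ i, shiftedLegendre n (x i) := by
      intro k
      rw [hf]
      simp only [hg]
      rw [Finset.prod_mul_distrib, ← Finset.prod_pow]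
    calc (∏ i, shiftedLegendre n (x i)) / (1 - t)
        = (1 - t)⁻¹ * ∏ i, shiftedLegendre n (x i) := by rw [div_eq_mul_inv, mul_comm]
      _ = (∑' k, t ^ k) * ∏ i, shiftedLegendre n (x i) := by
          rw [tsum_geometric_of_lt_one ht0 ht1]
      _ = ∑' k, t ^ k * ∏ i, shiftedLegendre n (x i) := (tsum_mul_right).symm
      _ = ∑' k, f k x := by rw [tsum_congr fun k => (hfk k).symm]
  have hmeas : ∀ k, AEStronglyMeasurable (f k) ν := by
    intro k
    exact (Continuous.aestronglyMeasurable (by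
      exact continuous_finset_prod _ fun i _ => (hgc k).comp (continuous_apply i)))
  have hfint : ∀ k, Integrable (f k) ν := fun k => (pi_integral r (g k) (hgint k)).1
  -- lintegral bound
  have hbound : (∑' k, ∫⁻ x, ‖f k x‖₊ ∂ν) ≠ ⊤ := by
    have hb1 : ∀ k, (∫⁻ x, ‖f k x‖₊ ∂ν) ≤ ENNReal.ofReal ((C / (k + 1 : ℝ)) ^ r) := by
      intro k
      simp_rw [← enorm_eq_nnnorm]; rw [← ofReal_integral_norm_eq_lintegral_enorm (hfint k)]
      apply ENNReal.ofReal_le_ofReal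
      have hnorm : ∀ x : Fin r → ℝ, ‖f k x‖ = ∏ i, ‖g k (x i)‖ := by
        intro x
        rw [hf]
        simp [Finset.abs_prod]
      calc (∫ x, ‖f k x‖ ∂ν) = ∫ x : Fin r → ℝ, (∏ i, ‖g k (x i)‖) ∂ν := by
              exact integral_congr_ae (Filter.Eventually.of_forall hnorm)
        _ = (∫ x in Set.Ioo (0:ℝ) 1, ‖g k x‖) ^ r := (pi_integral r _ ((hgint k).norm)).2
        _ ≤ (C / (k + 1 : ℝ)) ^ r := by
            apply pow_le_pow_left₀ _ (habs k)
            exact integral_nonneg fun x => norm_nonneg _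
    have hle : (∑' k, ∫⁻ x, ‖f k x‖₊ ∂ν)
        ≤ ENNReal.ofReal (∑' k : ℕ, (C / ((k:ℝ) + 1)) ^ r) := by
      rw [ENNReal.ofReal_tsum_of_nonneg (fun k => by positivity) hsum]
      exact ENNReal.tsum_le_tsum hb1
    exact ne_top_of_le_ne_top ENNReal.ofReal_ne_top hle
  have key : (∫ x in Set.univ.pi (fun _ : Fin r => Set.Ioo (0:ℝ) 1),
      (∏ i, shiftedLegendre n (x i)) / (1 - ∏ i, x i))
      = ∑' k : ℕ, (∫ x in (0:ℝ)..1, x ^ k * shiftedLegendre n x) ^ r := by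
    have e1 : (∫ x in Set.univ.pi (fun _ : Fin r => Set.Ioo (0:ℝ) 1),
        (∏ i, shiftedLegendre n (x i)) / (1 - ∏ i, x i))
        = ∫ x in Set.univ.pi (fun _ : Fin r => Set.Ioo (0:ℝ) 1), ∑' k, f k x :=
      integral_congr_ae (by filter_upwards [ae_restrict_mem hSm] with x hx using hpt x hx)
    rw [e1]
    rw [show (volume : Measure (Fin r → ℝ)).restrict
        (Set.univ.pi fun _ : Fin r => Set.Ioo (0:ℝ) 1) = ν from pi_restrict r]
    rw [integral_tsum hmeas hbound]
    exact tsum_congr fun k => by rw [(pi_integral r (g k) (hgint k)).2, hioo k]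
  refine ⟨key, ?_⟩
  rw [key]
  exact tsum_congr fun k => by rw [integral_pow_mul_shiftedLegendre]
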